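/- arXiv:2509.06670 — 4 statements merged into one kernel-verified Lean document; each statement's English description precedes it below -/
import Mathlib

section
/- Let F be a field, k ≤ n, and let G ∈ F[D]^{k×n} have full row rank. Let M ∈ F(D)^{k×k} be an invertible matrix such that every entry of the product M·G (computed over F(D)) is a polynomial, i.e. M·G is the image of a polynomial matrix G' ∈ F[D]^{k×n}. Then there exists a nonzero scalar λ ∈ F such that, in F(D), Δ(G') = λ · Δ(G) · det M. -/
open Polynomial Matrix

/-- `Δ(G)`: the monic gcd of the `k × k` minors of the polynomial matrix `G`. -/
noncomputable def Delta {F : Type*} [Field F] {k n : ℕ}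
    (G : Matrix (Fin k) (Fin n) (Polynomial F)) : Polynomial F :=
  letI := Classical.decEq F
  Finset.univ.gcd fun f : Fin k ↪ Fin n => (G.submatrix id f).det

/-- A polynomial matrix has full row rank if its rows are linearly independent over `F(D)`. -/
def FullRowRank {F : Type*} [Field F] {k n : ℕ}
    (G : Matrix (Fin k) (Fin n) (Polynomial F)) : Prop :=
  LinearIndependent (RatFunc F) fun i => (G.map (algebraMap (Polynomial F) (RatFunc F))) i

theorem delta_mul_of_rational_left {F : Type*} [Field F] {k n : ℕ} (hkn : k ≤ n)
    (G : Matrix (Fin k) (Fin n) (Polynomial F)) (hG : FullRowRank G)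
    (M : Matrix (Fin k) (Fin k) (RatFunc F)) (hM : IsUnit M.det)
    (G' : Matrix (Fin k) (Fin n) (Polynomial F))
    (hMG : G'.map (algebraMap (Polynomial F) (RatFunc F)) =
      M * G.map (algebraMap (Polynomial F) (RatFunc F))) :
    ∃ lam : F, lam ≠ 0 ∧
      algebraMap (Polynomial F) (RatFunc F) (Delta G') =
        algebraMap F (RatFunc F) lam * algebraMap (Polynomial F) (RatFunc F) (Delta G) * M.det := by
  letI := Classical.decEq F
  set φ := algebraMap (Polynomial F) (RatFunc F) with hφdef
  have hφinj : Function.Injective φ := IsFractionRing.injective _ _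
  have hMdet : M.det ≠ 0 := hM.ne_zero
  set p := (M.det).num with hp
  set q := (M.det).denom with hq
  have hq0 : q ≠ 0 := RatFunc.denom_ne_zero _
  have hp0 : p ≠ 0 := RatFunc.num_ne_zero hMdet
  have hφq : φ q ≠ 0 := fun h => hq0 (hφinj (h.trans (map_zero φ).symm))
  have hdet : φ p = M.det * φ q := by
    rw [← RatFunc.num_div_denom M.det, div_mul_cancel₀]
    exact hφq
  -- key minor relation
  have key : ∀ f : Fin k ↪ Fin n,
      φ ((G'.submatrix id f).det) = M.det * φ ((G.submatrix id f).det) := by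
    intro f
    have h1 : (G'.submatrix id f).map φ = M * (G.submatrix id f).map φ := by
      ext i j
      have := congrFun (congrFun hMG i) (f j)
      simpa [Matrix.map_apply, Matrix.mul_apply] using this
    have := congrArg Matrix.det h1
    rw [det_mul] at this
    rw [← RingHom.mapMatrix_apply, ← RingHom.mapMatrix_apply, ← RingHom.map_det, ← RingHom.map_det] at this
    exact this
  have hmul : ∀ f : Fin k ↪ Fin n,
      q * (G'.submatrix id f).det = p * (G.submatrix id f).det := by
    intro f
    apply hφinj
    rw [_root_.map_mul, _root_.map_mul, key, hdet]
    ring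
  have hgcd : normalize q * Delta G' = normalize p * Delta G := by
    unfold Delta
    rw [← Finset.gcd_mul_left, ← Finset.gcd_mul_left]
    exact Finset.gcd_congr rfl fun f _ => hmul f
  have hlq : q.leadingCoeff ≠ 0 := leadingCoeff_ne_zero.mpr hq0
  have hlp : p.leadingCoeff ≠ 0 := leadingCoeff_ne_zero.mpr hp0
  refine ⟨q.leadingCoeff * p.leadingCoeff⁻¹, mul_ne_zero hlq (inv_ne_zero hlp), ?_⟩
  have hnq : normalize q = q * Polynomial.C q.leadingCoeff⁻¹ := by
    rw [normalize_apply, coe_normUnit_of_ne_zero hq0]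
  have hnp : normalize p = p * Polynomial.C p.leadingCoeff⁻¹ := by
    rw [normalize_apply, coe_normUnit_of_ne_zero hp0]
  have h2 := congrArg φ hgcd
  rw [hnq, hnp, _root_.map_mul, _root_.map_mul, _root_.map_mul, _root_.map_mul, hdet] at h2
  have halgC : ∀ a : F, algebraMap F (RatFunc F) a = φ (Polynomial.C a) := by
    intro a
    rw [IsScalarTower.algebraMap_apply F (Polynomial F) (RatFunc F)]
    rfl
  rw [halgC, Polynomial.C_mul, _root_.map_mul]
  have hBB : φ (Polynomial.C q.leadingCoeff) * φ (Polynomial.C q.leadingCoeff⁻¹) = 1 := by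
    rw [← _root_.map_mul, ← Polynomial.C_mul, mul_inv_cancel₀ hlq, Polynomial.C_1, _root_.map_one]
  have hφClq : φ (Polynomial.C q.leadingCoeff⁻¹) ≠ 0 := by
    simp only [ne_eq, map_eq_zero_iff φ hφinj, Polynomial.C_eq_zero]
    exact inv_ne_zero hlq
  have h3 : φ q * φ (Polynomial.C q.leadingCoeff⁻¹) * φ (Delta G') =
      φ q * φ (Polynomial.C q.leadingCoeff⁻¹) *
        (φ (Polynomial.C q.leadingCoeff) * φ (Polynomial.C p.leadingCoeff⁻¹) * φ (Delta G) * M.det) := by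
    rw [h2]
    linear_combination (-(M.det * φ q * φ (Polynomial.C p.leadingCoeff⁻¹) * φ (Delta G))) * hBB
  exact mul_left_cancel₀ (mul_ne_zero hφq hφClq) h3
end

section
/- Let F be a field, k ≤ n, let G ∈ F[D]^{k×n} have full row rank, and let P ∈ F[D] be an irreducible polynomial dividing Δ(G). Then there exists a unimodular matrix M ∈ F[D]^{k×k} (a polynomial matrix whose determinant is a nonzero constant of F) such that some row of the polynomial matrix M·G has all of its entries divisible by P. -/
open Polynomial Matrix

/-- Over a field, if all `k × k` minors of a `k × n` matrix vanish, then its rows are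
linearly dependent. -/
theorem aux_rows_dependent {K : Type*} [Field K] {k n : ℕ}
    (A : Matrix (Fin k) (Fin n) K)
    (h : ∀ f : Fin k ↪ Fin n, (A.submatrix id f).det = 0) :
    ∃ c : Fin k → K, c ≠ 0 ∧ ∀ l, ∑ i, c i * A i l = 0 := by
  classical
  by_cases hli : LinearIndependent K fun i => A i
  · -- derive a contradiction: some k×k minor would be a unit
    exfalso
    have hrank : A.rank = k := by
      simpa using hli.rank_matrix
    have hspan : Submodule.span K (Set.range Aᵀ) = ⊤ := by
      apply Submodule.eq_top_of_finrank_eq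
      have := A.rank_eq_finrank_span_cols
      rw [hrank] at this
      change Module.finrank K (Submodule.span K (Set.range A.col)) = _
      rw [← this, Module.finrank_fintype_fun_eq_card, Fintype.card_fin]
    obtain ⟨t, hts, htspan, htli⟩ := exists_linearIndependent K (Set.range Aᵀ)
    rw [hspan] at htspan
    have htfin : t.Finite := (Set.finite_range Aᵀ).subset hts
    haveI : Fintype t := htfin.fintype
    -- t is a basis of K^k
    let b : Module.Basis t K (Fin k → K) :=
      Module.Basis.mk htli (by rw [Subtype.range_coe, htspan])
    have hcard : Fintype.card t = k := by
      have h1 := Module.finrank_eq_card_basis b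
      rw [Module.finrank_fintype_fun_eq_card, Fintype.card_fin] at h1
      omega
    let e : Fin k ≃ t := (Fintype.equivFinOfCardEq hcard).symm
    -- pick column indices
    have hchoice : ∀ v : t, ∃ j : Fin n, Aᵀ j = (v : Fin k → K) := fun v => hts v.2
    choose j hj using hchoice
    have hgi : Function.Injective fun i : Fin k => j (e i) := by
      intro i i' hii'
      have h2 : j (e i) = j (e i') := hii'
      have : Aᵀ (j (e i)) = Aᵀ (j (e i')) := by rw [h2]
      rw [hj, hj] at this
      exact e.injective (Subtype.ext this)
    set f : Fin k ↪ Fin n := ⟨fun i => j (e i), hgi⟩ with hf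
    have hcols : LinearIndependent K fun i : Fin k => (A.submatrix id f)ᵀ i := by
      have : (fun i : Fin k => (A.submatrix id f)ᵀ i)
          = fun i : Fin k => ((e i : Fin k → K)) := by
        funext i
        have := hj (e i)
        funext r
        simpa [Matrix.transpose_apply, hf] using congrFun this r
      rw [this]
      exact htli.comp (fun i => e i) (fun a b hab => e.injective hab)
    have := Matrix.linearIndependent_cols_iff_isUnit.mp hcols
    have hdet : IsUnit (A.submatrix id f).det :=
      (Matrix.isUnit_iff_isUnit_det _).mp this
    rw [h f] at hdet
    exact hdet.ne_zero rfl
  · obtain ⟨g, hg, i, hi⟩ := Fintype.not_linearIndependent_iff.mp hli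
    refine ⟨g, ?_, fun l => ?_⟩
    · intro h0; exact hi (by rw [h0]; rfl)
    · have := congrFun hg l
      simpa [Finset.sum_apply] using this

theorem exists_unimodular_row_divisible {F : Type*} [Field F] {k n : ℕ} (hkn : k ≤ n)
    (G : Matrix (Fin k) (Fin n) (Polynomial F)) (hG : FullRowRank G)
    (P : Polynomial F) (hP : Irreducible P) (hPdvd : P ∣ Delta G) :
    ∃ M : Matrix (Fin k) (Fin k) (Polynomial F), IsUnit M.det ∧
      ∃ i : Fin k, ∀ l, P ∣ (M * G) i l := by
  classical
  -- the residue field K = F[D]/(P)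
  haveI hmax : (Ideal.span {P}).IsMaximal :=
    PrincipalIdealRing.isMaximal_of_irreducible hP
  letI : Field (Polynomial F ⧸ Ideal.span {P}) := Ideal.Quotient.field _
  set φ := Ideal.Quotient.mk (Ideal.span {P}) with hφ
  have hker : ∀ x : Polynomial F, φ x = 0 ↔ P ∣ x := by
    intro x
    rw [hφ, Ideal.Quotient.eq_zero_iff_mem, Ideal.mem_span_singleton]
  -- the reduced matrix
  set A : Matrix (Fin k) (Fin n) (Polynomial F ⧸ Ideal.span {P}) := G.map φ with hA
  -- all minors of A vanish
  have hminor : ∀ f : Fin k ↪ Fin n, (A.submatrix id f).det = 0 := by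
    intro f
    have h1 : A.submatrix id f = (G.submatrix id f).map φ := by
      rw [hA]; ext i l; simp [Matrix.submatrix_apply, Matrix.map_apply]
    have h2 : ((G.submatrix id ⇑f).map ⇑φ).det = φ (G.submatrix id ⇑f).det :=
      (RingHom.map_det φ _).symm
    rw [h1, h2, hker]
    have hgd : Delta G ∣ (G.submatrix id f).det := by
      have : (fun f : Fin k ↪ Fin n => (G.submatrix id f).det) f
          = (G.submatrix id f).det := rfl
      exact this ▸ Finset.gcd_dvd (Finset.mem_univ f)
    exact hPdvd.trans hgd
  obtain ⟨c, hc0, hc⟩ := aux_rows_dependent A hminor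
  obtain ⟨i₀, hi₀⟩ := Function.ne_iff.mp hc0
  -- normalize so that the i₀ coordinate is 1
  set c' : Fin k → Polynomial F ⧸ Ideal.span {P} := fun i => (c i₀)⁻¹ * c i with hc'
  have hc'i₀ : c' i₀ = 1 := by
    rw [hc']; exact inv_mul_cancel₀ hi₀
  have hc'sum : ∀ l, ∑ i, c' i * A i l = 0 := by
    intro l
    rw [hc']
    simp only [mul_assoc]
    rw [← Finset.mul_sum, hc l, mul_zero]
  -- lift c' to polynomials
  have hlift : ∀ i : Fin k, ∃ p : Polynomial F, φ p = c' i := fun i =>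
    Ideal.Quotient.mk_surjective (c' i)
  choose m₀ hm₀ using hlift
  set m : Fin k → Polynomial F := fun i => if i = i₀ then 1 else m₀ i with hm
  have hφm : ∀ i, φ (m i) = c' i := by
    intro i
    rw [hm]
    by_cases hii : i = i₀
    · subst hii; simp [hc'i₀]
    · simp [hii, hm₀]
  -- the unimodular matrix
  refine ⟨(1 : Matrix (Fin k) (Fin k) (Polynomial F)).updateRow i₀ m, ?_, i₀, ?_⟩
  · -- determinant is 1
    have hmsum : m = ∑ j, m j • (1 : Matrix (Fin k) (Fin k) (Polynomial F)) j := by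
      funext l
      simp [Matrix.one_apply, Finset.sum_apply, mul_ite]
    rw [hmsum, Matrix.det_updateRow_sum]
    have : m i₀ = 1 := by rw [hm]; simp
    rw [this, Matrix.det_one]
    simp
  · -- row i₀ of M*G is divisible by P
    intro l
    rw [← hker]
    have hrow : ((1 : Matrix (Fin k) (Fin k) (Polynomial F)).updateRow i₀ m * G) i₀ l
        = ∑ j, m j * G j l := by
      simp [Matrix.mul_apply]
    rw [hrow, map_sum]
    have : ∀ j, φ (m j * G j l) = c' j * A j l := by
      intro j
      rw [_root_.map_mul, hφm]
      rfl
    rw [Finset.sum_congr rfl fun j _ => this j]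
    exact hc'sum l
end

section
/- Let p be a prime, r ≥ 1, and let P, Q ∈ Z_{p^r}[D] be regular polynomials. Then the projection P̄ divides the projection Q̄ in Z_p[D] if and only if there exists an integer i ∈ {0,…,r−1} such that for every integer j with i ≤ j ≤ r−1, the polynomial p^j·P divides p^j·Q in Z_{p^r}[D]. -/
open Polynomial Matrix

/-- The canonical embedding of `R[D]` into the ring of formal Laurent series `R((D))`. -/
noncomputable def polyToLS {R : Type*} [CommRing R] : Polynomial R →+* LaurentSeries R :=
  (HahnSeries.ofPowerSeries ℤ R).comp Polynomial.coeToPowerSeries.ringHom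

/-- A Laurent series has finite weight iff it has finitely many nonzero coefficients. -/
def FinWt {R : Type*} [Zero R] (f : LaurentSeries R) : Prop := f.support.Finite

/-- A vector of Laurent series has finite weight iff every component does. -/
def FinWtVec {R : Type*} [Zero R] {n : ℕ} (u : Fin n → LaurentSeries R) : Prop :=
  ∀ i, FinWt (u i)

/-- The convolutional code (the `R((D))`-row span) generated by a polynomial matrix. -/
def codeOf {R : Type*} [CommRing R] {k n : ℕ}
    (G : Matrix (Fin k) (Fin n) (Polynomial R)) : Set (Fin n → LaurentSeries R) :=
  { v | ∃ u : Fin k → LaurentSeries R, v = Matrix.vecMul u (G.map polyToLS) }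

/-- A polynomial matrix is noncatastrophic if finite-weight outputs come exactly from
finite-weight inputs. -/
def Noncat {R : Type*} [CommRing R] {k n : ℕ}
    (G : Matrix (Fin k) (Fin n) (Polynomial R)) : Prop :=
  ∀ u : Fin k → LaurentSeries R,
    FinWtVec (Matrix.vecMul u (G.map polyToLS)) ↔ FinWtVec u

/-- Entrywise reduction mod `p` of a polynomial over `ZMod (p ^ r)`. -/
noncomputable def projP (p r : ℕ) (hr : r ≠ 0) :
    Polynomial (ZMod (p ^ r)) → Polynomial (ZMod p) :=
  Polynomial.map (ZMod.castHom (dvd_pow_self p hr) (ZMod p))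

/-- Entrywise reduction mod `p` of a matrix of polynomials over `ZMod (p ^ r)`. -/
noncomputable def projM {k n : ℕ} (p r : ℕ) (hr : r ≠ 0)
    (G : Matrix (Fin k) (Fin n) (Polynomial (ZMod (p ^ r)))) :
    Matrix (Fin k) (Fin n) (Polynomial (ZMod p)) :=
  G.map (projP p r hr)

/-- `Δ_p(G) := Δ(Ḡ)` for a polynomial matrix over `ZMod (p ^ r)`. -/
noncomputable def Deltap (p r : ℕ) [Fact p.Prime] (hr : r ≠ 0) {k n : ℕ}
    (G : Matrix (Fin k) (Fin n) (Polynomial (ZMod (p ^ r)))) : Polynomial (ZMod p) :=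
  Delta (projM p r hr G)


theorem proj_dvd_iff_smul_dvd (p r : ℕ) (hp : p.Prime) (hr : 1 ≤ r)
    (P Q : Polynomial (ZMod (p ^ r)))
    (hP : projP p r (Nat.one_le_iff_ne_zero.mp hr) P ≠ 0)
    (hQ : projP p r (Nat.one_le_iff_ne_zero.mp hr) Q ≠ 0) :
    projP p r (Nat.one_le_iff_ne_zero.mp hr) P ∣ projP p r (Nat.one_le_iff_ne_zero.mp hr) Q ↔
      ∃ i : ℕ, i < r ∧ ∀ j : ℕ, i ≤ j → j < r →
        ((p : ZMod (p ^ r)) ^ j • P) ∣ ((p : ZMod (p ^ r)) ^ j • Q) := by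
  haveI : Fact p.Prime := ⟨hp⟩
  have hr' : r ≠ 0 := Nat.one_le_iff_ne_zero.mp hr
  set f := ZMod.castHom (dvd_pow_self p hr') (ZMod p) with hf
  haveI : NeZero (p ^ r) := ⟨pow_ne_zero _ hp.pos.ne'⟩
  -- key scalar lemma
  have key : ∀ c : ZMod (p ^ r), (p : ZMod (p ^ r)) ^ (r - 1) * c = 0 ↔ f c = 0 := by
    intro c
    have hc : c = ((c.val : ℕ) : ZMod (p ^ r)) := by
      rw [ZMod.natCast_val, ZMod.cast_id]
    have hfc : f c = ((c.val : ℕ) : ZMod p) := by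
      conv_lhs => rw [hc]
      exact map_natCast f c.val
    have hpr : p ^ r = p ^ (r - 1) * p := by
      rw [← pow_succ, Nat.sub_add_cancel hr]
    constructor
    · intro h
      rw [hc] at h
      have h2 : ((p ^ (r - 1) * c.val : ℕ) : ZMod (p ^ r)) = 0 := by push_cast; exact h
      rw [ZMod.natCast_eq_zero_iff] at h2
      have h3 : p ^ (r - 1) * p ∣ p ^ (r - 1) * c.val := by rw [← hpr]; exact h2
      have hpdvd : p ∣ c.val :=
        (mul_dvd_mul_iff_left (a := p ^ (r - 1)) (pow_ne_zero _ hp.pos.ne')).mp h3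
      rw [hfc]
      exact (ZMod.natCast_eq_zero_iff _ _).mpr hpdvd
    · intro h
      rw [hfc] at h
      obtain ⟨d, hd⟩ := (ZMod.natCast_eq_zero_iff _ _).mp h
      rw [hc, hd]
      push_cast
      rw [← mul_assoc, ← pow_succ, Nat.sub_add_cancel hr, ← Nat.cast_pow, ZMod.natCast_self,
        zero_mul]
  -- polynomial-level version
  have keyP : ∀ X : Polynomial (ZMod (p ^ r)),
      (p : ZMod (p ^ r)) ^ (r - 1) • X = 0 ↔ projP p r hr' X = 0 := by
    intro X
    constructor
    · intro h
      ext n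
      have := congrArg (fun Y => Polynomial.coeff Y n) h
      simp only [Polynomial.coeff_smul, smul_eq_mul, Polynomial.coeff_zero] at this
      simpa [projP, Polynomial.coeff_map, ← hf] using (key (X.coeff n)).mp this
    · intro h
      ext n
      have := congrArg (fun Y => Polynomial.coeff Y n) h
      simp only [projP, Polynomial.coeff_map, Polynomial.coeff_zero, ← hf] at this
      simpa [Polynomial.coeff_smul, smul_eq_mul] using (key (X.coeff n)).mpr this
  have hsurj : Function.Surjective (projP p r hr') := by
    apply Polynomial.map_surjective
    intro x
    haveI : NeZero p := ⟨hp.pos.ne'⟩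
    obtain ⟨n, hn⟩ := (ZMod.natCast_rightInverse (n := p)).surjective x
    exact ⟨(n : ZMod (p ^ r)), by simp [← hf, hn]⟩
  have hrm : r - 1 < r := Nat.sub_lt (Nat.lt_of_lt_of_le Nat.zero_lt_one hr) Nat.zero_lt_one
  constructor
  · rintro ⟨A, hA⟩
    refine ⟨r - 1, hrm, fun j hij hjr => ?_⟩
    have hj : j = r - 1 := Nat.le_antisymm (Nat.le_sub_one_of_lt hjr) hij
    subst hj
    obtain ⟨B, hB⟩ := hsurj A
    refine ⟨B, ?_⟩
    have hz : (p : ZMod (p ^ r)) ^ (r - 1) • (Q - P * B) = 0 := by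
      rw [keyP]
      simp only [projP, Polynomial.map_sub, Polynomial.map_mul]
      change projP p r hr' Q - projP p r hr' P * projP p r hr' B = 0
      rw [hB, ← hA]
      ring
    have hsub : (p : ZMod (p ^ r)) ^ (r - 1) • Q - (p : ZMod (p ^ r)) ^ (r - 1) • (P * B) = 0 := by
      rw [← smul_sub]; exact hz
    rw [smul_mul_assoc]
    exact sub_eq_zero.mp hsub
  · rintro ⟨i, hi, h⟩
    obtain ⟨B, hB⟩ := h (r - 1) (Nat.le_sub_one_of_lt hi) hrm
    rw [smul_mul_assoc] at hB
    have hz : (p : ZMod (p ^ r)) ^ (r - 1) • (Q - P * B) = 0 := by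
      rw [smul_sub, hB, sub_self]
    rw [keyP] at hz
    refine ⟨projP p r hr' B, ?_⟩
    have : projP p r hr' (Q - P * B) = 0 := hz
    simp only [projP, Polynomial.map_sub, Polynomial.map_mul] at this
    change projP p r hr' Q - projP p r hr' P * projP p r hr' B = 0 at this
    exact sub_eq_zero.mp this
end

section
/- Let p be a prime, r ≥ 1, k ≤ n, and let G ∈ Z_{p^r}[D]^{k×n} be such that its projection Ḡ ∈ Z_p[D]^{k×n} has full row rank over Z_p(D). Then there exist an integer i₀ ∈ {0,…,r−1} and a noncatastrophic polynomial matrix H ∈ Z_{p^r}[D]^{k×n} such that for every integer i with i₀ ≤ i ≤ r−1, the Z_{p^r}((D))-span of the rows of p^i·H equals the Z_{p^r}((D))-span of the rows of p^i·G. -/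
open Polynomial Matrix

lemma polyToLS_C {R : Type*} [CommRing R] (a : R) : polyToLS (C a) = HahnSeries.C a := by
  simp only [polyToLS, RingHom.comp_apply, Polynomial.coeToPowerSeries.ringHom_apply,
    Polynomial.coe_C, HahnSeries.ofPowerSeries_C]

lemma polyToLS_X {R : Type*} [CommRing R] : polyToLS (X : Polynomial R) = HahnSeries.single 1 1 := by
  simp only [polyToLS, RingHom.comp_apply, Polynomial.coeToPowerSeries.ringHom_apply,
    Polynomial.coe_X, HahnSeries.ofPowerSeries_X]

lemma polyToLS_injective {R : Type*} [CommRing R] :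
    Function.Injective (polyToLS (R := R)) :=
  HahnSeries.ofPowerSeries_injective.comp (Polynomial.coe_injective R)

lemma FinWt.add {R : Type*} [CommRing R] {x y : LaurentSeries R} (hx : FinWt x) (hy : FinWt y) :
    FinWt (x + y) :=
  Set.Finite.subset (hx.union hy) (HahnSeries.support_add_subset x y)

lemma FinWt.mul {R : Type*} [CommRing R] {x y : LaurentSeries R} (hx : FinWt x) (hy : FinWt y) :
    FinWt (x * y) :=
  Set.Finite.subset (Set.Finite.add hx hy) HahnSeries.support_mul_subset

lemma finwt_zero {R : Type*} [CommRing R] : FinWt (0 : LaurentSeries R) := by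
  simp [FinWt]

lemma finwt_single {R : Type*} [CommRing R] (a : ℤ) (r : R) :
    FinWt (HahnSeries.single a r) :=
  Set.Finite.subset (Set.finite_singleton a) HahnSeries.support_single_subset

lemma finwt_sum {R : Type*} [CommRing R] {ι : Type*} (s : Finset ι) (f : ι → LaurentSeries R)
    (h : ∀ i ∈ s, FinWt (f i)) : FinWt (∑ i ∈ s, f i) := by
  classical
  induction s using Finset.induction_on with
  | empty => simpa using finwt_zero
  | insert _ _ hni ih =>
    rw [Finset.sum_insert hni]
    exact (h _ (Finset.mem_insert_self _ _)).add (ih fun i hi => h i (Finset.mem_insert_of_mem hi))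

lemma finwt_polyToLS {R : Type*} [CommRing R] (q : Polynomial R) : FinWt (polyToLS q) := by
  induction q using Polynomial.induction_on with
  | C a => rw [polyToLS_C]; exact finwt_single 0 a
  | add p q hp hq => rw [map_add]; exact hp.add hq
  | monomial m a ih =>
    rw [pow_succ, ← mul_assoc, _root_.map_mul, polyToLS_X]
    exact ih.mul (finwt_single 1 1)


lemma finwtvec_vecMul {R : Type*} [CommRing R] {k m : ℕ} {u : Fin k → LaurentSeries R}
    (hu : FinWtVec u) (M : Matrix (Fin k) (Fin m) (Polynomial R)) :
    FinWtVec (Matrix.vecMul u (M.map polyToLS)) := by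
  intro j
  rw [Matrix.vecMul, dotProduct]
  exact finwt_sum _ _ fun i _ => (hu i).mul (finwt_polyToLS _)

lemma noncat_of_rightInverse {R : Type*} [CommRing R] {k n : ℕ}
    {H : Matrix (Fin k) (Fin n) (Polynomial R)} {C : Matrix (Fin n) (Fin k) (Polynomial R)}
    (hHC : H * C = 1) : Noncat H := by
  intro u
  constructor
  · intro h
    have h2 := finwtvec_vecMul h C
    rw [Matrix.vecMul_vecMul, ← Matrix.map_mul, hHC] at h2
    have h1 : (1 : Matrix (Fin k) (Fin k) (Polynomial R)).map (polyToLS (R := R)) = 1 :=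
      Matrix.map_one _ (map_zero _) (map_one _)
    rwa [h1, Matrix.vecMul_one] at h2
  · intro h
    exact finwtvec_vecMul h H

lemma codeOf_subset_of_rows {R : Type*} [CommRing R] {k n : ℕ}
    {H G : Matrix (Fin k) (Fin n) (Polynomial R)}
    (h : ∀ i, ∃ w : Fin k → LaurentSeries R,
      (H.map polyToLS) i = Matrix.vecMul w (G.map polyToLS)) :
    codeOf H ⊆ codeOf G := by
  choose w hw using h
  have hH : H.map polyToLS = (Matrix.of w) * (G.map polyToLS) := by
    apply Matrix.ext; intro i j
    have := congrFun (hw i) j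
    simpa [Matrix.mul_apply, Matrix.vecMul, dotProduct] using this
  rintro v ⟨u, rfl⟩
  exact ⟨Matrix.vecMul u (Matrix.of w), by rw [hH, Matrix.vecMul_vecMul]⟩


/-- coefficientwise ring hom on Laurent series -/
noncomputable def lsMap {R S : Type*} [CommRing R] [CommRing S] (f : R →+* S) :
    LaurentSeries R →+* LaurentSeries S where
  toFun x := x.map f
  map_one' := by
    have h := HahnSeries.map_one (Γ := ℤ) (f := f.toMonoidWithZeroHom)
    ext g
    simpa using congrArg (fun z => z.coeff g) h
  map_mul' x y := by
    have h := HahnSeries.map_mul (Γ := ℤ) (f := (f : R →ₙ+* S)) (x := x) (y := y)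
    ext g
    exact congrArg (fun z => z.coeff g) h
  map_zero' := by
    ext g
    simp
  map_add' x y := by
    have h := HahnSeries.map_add (Γ := ℤ) (f := (f : R →+ S)) (x := x) (y := y)
    ext g
    simpa using congrArg (fun z => z.coeff g) h

@[simp] lemma lsMap_coeff {R S : Type*} [CommRing R] [CommRing S] (f : R →+* S)
    (x : LaurentSeries R) (g : ℤ) : (lsMap f x).coeff g = f (x.coeff g) := rfl

lemma lsMap_polyToLS {R S : Type*} [CommRing R] [CommRing S] (f : R →+* S) (q : Polynomial R) :
    lsMap f (polyToLS q) = polyToLS (q.map f) := by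
  have h : (lsMap f).comp (polyToLS (R := R)) =
      (polyToLS (R := S)).comp (Polynomial.mapRingHom f) := by
    apply Polynomial.ringHom_ext
    · intro a
      simp only [RingHom.comp_apply, Polynomial.coe_mapRingHom, Polynomial.map_C, polyToLS_C]
      ext g
      by_cases hg : g = 0 <;> simp [HahnSeries.C, hg]
    · simp only [RingHom.comp_apply, Polynomial.coe_mapRingHom, Polynomial.map_X, polyToLS_X]
      ext g
      by_cases hg : g = 1 <;> simp [hg]
  have := congrArg (fun φ => φ q) h
  simpa using this

section modp
variable (p r : ℕ) [Fact p.Prime] (hr : r ≠ 0)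

abbrev pi0 : ZMod (p ^ r) →+* ZMod p := ZMod.castHom (dvd_pow_self p hr) (ZMod p)

lemma proj_zero_iff (c : ZMod (p ^ r)) :
    pi0 p r hr c = 0 ↔ (p : ℕ) ∣ c.val := by
  haveI : NeZero p := ⟨(Fact.out : p.Prime).ne_zero⟩
  haveI : NeZero (p ^ r) := ⟨pow_ne_zero r (Fact.out : p.Prime).ne_zero⟩
  have hc : ((c.val : ℕ) : ZMod (p ^ r)) = c := ZMod.natCast_rightInverse c
  constructor
  · intro h
    rw [← hc, map_natCast] at h
    exact (ZMod.natCast_eq_zero_iff _ _).mp h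
  · intro h
    rw [← hc, map_natCast]
    exact (ZMod.natCast_eq_zero_iff _ _).mpr h

lemma pow_mul_eq_zero_iff (c : ZMod (p ^ r)) :
    (p : ZMod (p ^ r)) ^ (r - 1) * c = 0 ↔ pi0 p r hr c = 0 := by
  haveI : NeZero p := ⟨(Fact.out : p.Prime).ne_zero⟩
  haveI : NeZero (p ^ r) := ⟨pow_ne_zero r (Fact.out : p.Prime).ne_zero⟩
  have hc : ((c.val : ℕ) : ZMod (p ^ r)) = c := ZMod.natCast_rightInverse c
  rw [proj_zero_iff p r hr c]
  have : (p : ZMod (p ^ r)) ^ (r - 1) * c = ((p ^ (r - 1) * c.val : ℕ) : ZMod (p ^ r)) := by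
    push_cast
    rw [hc]
  rw [this, ZMod.natCast_eq_zero_iff]
  have hrr : p ^ r = p ^ (r - 1) * p := by
    rw [← pow_succ, Nat.sub_add_cancel (Nat.one_le_iff_ne_zero.mpr hr)]
  have hpos : 0 < p ^ (r - 1) := Nat.pow_pos (Fact.out : p.Prime).pos
  generalize c.val = m
  rw [hrr, Nat.mul_dvd_mul_iff_left hpos]

lemma pow_mul_eq_of_proj_eq {a b : ZMod (p ^ r)} (h : pi0 p r hr a = pi0 p r hr b) :
    (p : ZMod (p ^ r)) ^ (r - 1) * a = (p : ZMod (p ^ r)) ^ (r - 1) * b := by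
  have : (p : ZMod (p ^ r)) ^ (r - 1) * (a - b) = 0 := by
    rw [pow_mul_eq_zero_iff p r hr, map_sub, h, sub_self]
  rw [mul_sub, sub_eq_zero] at this
  exact this

lemma pdvd_of_proj_zero {c : ZMod (p ^ r)} (h : pi0 p r hr c = 0) :
    (p : ZMod (p ^ r)) ∣ c := by
  haveI : NeZero (p ^ r) := ⟨pow_ne_zero r (Fact.out : p.Prime).ne_zero⟩
  obtain ⟨d, hd⟩ := (proj_zero_iff p r hr c).mp h
  refine ⟨(d : ZMod (p ^ r)), ?_⟩
  have hc : ((c.val : ℕ) : ZMod (p ^ r)) = c := ZMod.natCast_rightInverse c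
  rw [← hc, hd]
  push_cast
  ring

/-- a set-theoretic section of reduction -/
def liftZ : ZMod p → ZMod (p ^ r) := fun a => (a.val : ZMod (p ^ r))

lemma pi0_liftZ (a : ZMod p) : pi0 p r hr (liftZ p r a) = a := by
  haveI : NeZero p := ⟨(Fact.out : p.Prime).ne_zero⟩
  rw [liftZ, map_natCast]
  exact ZMod.natCast_rightInverse a

lemma liftZ_zero : liftZ p r 0 = 0 := by
  haveI : NeZero p := ⟨(Fact.out : p.Prime).ne_zero⟩
  simp [liftZ]

end modp

section bridge
variable (p r : ℕ) [Fact p.Prime] (hr : r ≠ 0)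

/-- coefficientwise lift of a Laurent series -/
noncomputable def liftLS (x : LaurentSeries (ZMod p)) : LaurentSeries (ZMod (p ^ r)) :=
  x.map (ZeroHom.mk (liftZ p r) (liftZ_zero p r))

lemma lsMap_liftLS (x : LaurentSeries (ZMod p)) :
    lsMap (pi0 p r hr) (liftLS p r x) = x := by
  ext g
  simp only [lsMap_coeff, liftLS, HahnSeries.map_coeff, ZeroHom.coe_mk]
  exact pi0_liftZ p r hr _

variable {k n : ℕ}

lemma vecMul_smul_map (c : ZMod (p ^ r)) (M : Matrix (Fin k) (Fin n) (Polynomial (ZMod (p ^ r))))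
    (u : Fin k → LaurentSeries (ZMod (p ^ r))) :
    Matrix.vecMul u ((c • M).map polyToLS) =
      fun j => HahnSeries.C c * Matrix.vecMul u (M.map polyToLS) j := by
  funext j
  simp only [Matrix.vecMul, dotProduct, Matrix.map_apply, Matrix.smul_apply,
    Polynomial.smul_eq_C_mul, _root_.map_mul, polyToLS_C, Finset.mul_sum]
  exact Finset.sum_congr rfl fun i _ => by ring

lemma lsMap_vecMul (M : Matrix (Fin k) (Fin n) (Polynomial (ZMod (p ^ r))))
    (u : Fin k → LaurentSeries (ZMod (p ^ r))) (j : Fin n) :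
    lsMap (pi0 p r hr) (Matrix.vecMul u (M.map polyToLS) j) =
      Matrix.vecMul (fun i => lsMap (pi0 p r hr) (u i)) ((projM p r hr M).map polyToLS) j := by
  simp only [Matrix.vecMul, dotProduct, Matrix.map_apply, map_sum, _root_.map_mul,
    lsMap_polyToLS]
  rfl

lemma smul_eq_of_lsMap_eq {x y : LaurentSeries (ZMod (p ^ r))}
    (h : lsMap (pi0 p r hr) x = lsMap (pi0 p r hr) y) :
    HahnSeries.C ((p : ZMod (p ^ r)) ^ (r - 1)) * x
      = HahnSeries.C ((p : ZMod (p ^ r)) ^ (r - 1)) * y := by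
  rw [HahnSeries.C_mul_eq_smul, HahnSeries.C_mul_eq_smul]
  ext g
  rw [HahnSeries.coeff_smul, HahnSeries.coeff_smul, smul_eq_mul, smul_eq_mul]
  exact pow_mul_eq_of_proj_eq p r hr (by simpa using congrArg (fun z => z.coeff g) h)

lemma bridge_subset (M N : Matrix (Fin k) (Fin n) (Polynomial (ZMod (p ^ r))))
    (hcode : codeOf (projM p r hr M) ⊆ codeOf (projM p r hr N)) :
    codeOf (((p : ZMod (p ^ r)) ^ (r - 1)) • M) ⊆ codeOf (((p : ZMod (p ^ r)) ^ (r - 1)) • N) := by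
  rintro v ⟨u, rfl⟩
  have h1 : (fun j => lsMap (pi0 p r hr) (Matrix.vecMul u (M.map polyToLS) j)) ∈
      codeOf (projM p r hr M) :=
    ⟨fun i => lsMap (pi0 p r hr) (u i), funext fun j => lsMap_vecMul p r hr M u j⟩
  obtain ⟨w0, hw0⟩ := hcode h1
  set w : Fin k → LaurentSeries (ZMod (p ^ r)) := fun i => liftLS p r (w0 i) with hw
  have h2 : ∀ j, lsMap (pi0 p r hr) (Matrix.vecMul w (N.map polyToLS) j) =
      lsMap (pi0 p r hr) (Matrix.vecMul u (M.map polyToLS) j) := by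
    intro j
    rw [lsMap_vecMul]
    have : (fun i => lsMap (pi0 p r hr) (w i)) = w0 := by
      funext i
      simp [hw, lsMap_liftLS]
    rw [this]
    exact (congrFun hw0 j).symm
  refine ⟨w, ?_⟩
  rw [vecMul_smul_map, vecMul_smul_map]
  funext j
  exact (smul_eq_of_lsMap_eq p r hr (h2 j)).symm
end bridge

section lifting
variable (p r : ℕ) [Fact p.Prime] (hr : r ≠ 0)

/-- coefficientwise lift of polynomials -/
noncomputable def liftP (q : Polynomial (ZMod p)) : Polynomial (ZMod (p ^ r)) :=
  q.sum fun m a => Polynomial.C (liftZ p r a) * X ^ m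

lemma projP_liftP (q : Polynomial (ZMod p)) : projP p r hr (liftP p r q) = q := by
  rw [projP, liftP, Polynomial.sum]
  rw [Polynomial.map_sum]
  simp only [Polynomial.map_mul, Polynomial.map_C, Polynomial.map_pow, Polynomial.map_X]
  have : ∀ m ∈ q.support, Polynomial.C ((pi0 p r hr) (liftZ p r (q.coeff m))) * X ^ m
      = Polynomial.C (q.coeff m) * X ^ m := by
    intro m _
    rw [pi0_liftZ]
  rw [Finset.sum_congr rfl this]
  exact Polynomial.sum_C_mul_X_pow_eq q

variable {k n : ℕ}

noncomputable def liftMp (Hb : Matrix (Fin k) (Fin n) (Polynomial (ZMod p))) :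
    Matrix (Fin k) (Fin n) (Polynomial (ZMod (p ^ r))) :=
  Hb.map (liftP p r)

lemma projM_liftM (Hb : Matrix (Fin k) (Fin n) (Polynomial (ZMod p))) :
    projM p r hr (liftMp p r Hb) = Hb := by
  apply Matrix.ext
  intro i j
  exact projP_liftP p r hr _

/-- divisibility of all coefficients by powers of p -/
def Pdvd (s : ℕ) (q : Polynomial (ZMod (p ^ r))) : Prop :=
  ∀ t, (p : ZMod (p ^ r)) ^ s ∣ q.coeff t

lemma Pdvd.mul {s : ℕ} {a b : Polynomial (ZMod (p ^ r))}
    (ha : Pdvd p r s a) (hb : Pdvd p r 1 b) : Pdvd p r (s + 1) (a * b) := by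
  intro t
  rw [Polynomial.coeff_mul]
  refine Finset.dvd_sum fun x _ => ?_
  rw [pow_succ]
  exact mul_dvd_mul (ha x.1) (by simpa using hb x.2)

lemma Pdvd_of_proj_zero {q : Polynomial (ZMod (p ^ r))} (h : projP p r hr q = 0) :
    Pdvd p r 1 q := by
  intro t
  have : pi0 p r hr (q.coeff t) = 0 := by
    have := congrArg (fun z => Polynomial.coeff z t) h
    simpa [projP, Polynomial.coeff_map] using this
  simpa using pdvd_of_proj_zero p r hr this

lemma pow_eq_zero_matrix {m : ℕ} {N : Matrix (Fin m) (Fin m) (Polynomial (ZMod (p ^ r)))}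
    (hN : ∀ i j, Pdvd p r 1 (N i j)) : N ^ r = 0 := by
  have key : ∀ s : ℕ, ∀ i j, Pdvd p r s ((N ^ s) i j) := by
    intro s
    induction s with
    | zero =>
      intro i j t
      simp
    | succ s ih =>
      intro i j t
      have h2 : (N ^ (s + 1)) i j = ∑ l, (N ^ s) i l * N l j := by
        rw [pow_succ, Matrix.mul_apply]
      rw [h2, Polynomial.finset_sum_coeff]
      exact Finset.dvd_sum fun l _ => Pdvd.mul p r (ih i l) (hN l j) t
  haveI : NeZero p := ⟨(Fact.out : p.Prime).ne_zero⟩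
  have hpr : (p : ZMod (p ^ r)) ^ r = 0 := by
    have : ((p ^ r : ℕ) : ZMod (p ^ r)) = 0 := ZMod.natCast_self _
    push_cast at this
    exact this
  apply Matrix.ext
  intro i j
  apply Polynomial.ext
  intro t
  obtain ⟨d, hd⟩ := key r i j t
  simp [hd, hpr]

lemma geom_inverse {m : ℕ} {N : Matrix (Fin m) (Fin m) (Polynomial (ZMod (p ^ r)))}
    (hN : N ^ r = 0) : (1 - N) * ∑ i ∈ Finset.range r, N ^ i = 1 := by
  have h1 : (1 - N) * ∑ i ∈ Finset.range r, N ^ i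
      = ∑ i ∈ Finset.range r, (N ^ i - N ^ (i + 1)) := by
    rw [Finset.mul_sum]
    refine Finset.sum_congr rfl fun i _ => ?_
    rw [sub_mul, one_mul, pow_succ']
  rw [h1, Finset.sum_range_sub' (fun i => N ^ i), pow_zero, hN, sub_zero]
end lifting

set_option maxHeartbeats 1000000 in
set_option synthInstance.maxHeartbeats 1000000 in
theorem exists_basicEncoder (F : Type*) [Field F] {k n : ℕ}
    (Gb : Matrix (Fin k) (Fin n) (Polynomial F))
    (hG : LinearIndependent (RatFunc F)
      fun i => (Gb.map (algebraMap (Polynomial F) (RatFunc F))) i) :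
    ∃ (Hb : Matrix (Fin k) (Fin n) (Polynomial F)) (Cb : Matrix (Fin n) (Fin k) (Polynomial F)),
      Hb * Cb = 1 ∧
      (∀ i, ∃ w : Fin k → LaurentSeries F,
        (Hb.map polyToLS) i = Matrix.vecMul w (Gb.map polyToLS)) ∧
      (∀ l, ∃ w : Fin k → LaurentSeries F,
        (Gb.map polyToLS) l = Matrix.vecMul w (Hb.map polyToLS)) := by
  classical
  haveI hTower : IsScalarTower (Polynomial F) (RatFunc F) (Fin n → RatFunc F) :=
    Pi.isScalarTower
  set rows : Fin k → (Fin n → Polynomial F) := fun i => Gb i with hrows_def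
  set φ : (Fin n → Polynomial F) →ₗ[Polynomial F] (Fin n → RatFunc F) :=
    LinearMap.pi (fun j =>
      (Algebra.linearMap (Polynomial F) (RatFunc F)).comp (LinearMap.proj j)) with hφ_def
  have hφ_apply : ∀ (x : Fin n → Polynomial F) (j : Fin n),
      φ x j = algebraMap (Polynomial F) (RatFunc F) (x j) := fun x j => rfl
  have hφinj : Function.Injective φ := by
    intro x y h
    funext j
    exact IsFractionRing.injective (Polynomial F) (RatFunc F) (congrFun h j)
  have kerφ : LinearMap.ker φ = ⊥ := LinearMap.ker_eq_bot.mpr hφinj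
  have hGK : LinearIndependent (RatFunc F) (⇑φ ∘ rows) := hG
  have hrowsR : LinearIndependent (Polynomial F) rows :=
    LinearIndependent.of_comp φ
      ((LinearIndependent.iff_fractionRing (Polynomial F) (RatFunc F)).mpr hGK)
  set M : Submodule (Polynomial F) (Fin n → Polynomial F) :=
    Submodule.span (Polynomial F) (Set.range rows) with hM_def
  set Sat : Submodule (Polynomial F) (Fin n → Polynomial F) :=
    { carrier := {x | ∃ c : Polynomial F, c ≠ 0 ∧ c • x ∈ M}
      add_mem' := by
        rintro x y ⟨c, hc, hcx⟩ ⟨d, hd, hdy⟩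
        refine ⟨c * d, mul_ne_zero hc hd, ?_⟩
        rw [smul_add]
        exact M.add_mem (by rw [mul_comm c d, mul_smul]; exact M.smul_mem d hcx)
          (by rw [mul_smul]; exact M.smul_mem c hdy)
      zero_mem' := ⟨1, one_ne_zero, by simp⟩
      smul_mem' := by
        rintro a x ⟨c, hc, hcx⟩
        exact ⟨c, hc, by rw [smul_comm]; exact M.smul_mem a hcx⟩ } with hSat_def
  have hMSat : ∀ x ∈ M, x ∈ Sat := fun x hx => ⟨1, one_ne_zero, by simpa using hx⟩
  haveI : NoZeroSMulDivisors (Polynomial F) ((Fin n → Polynomial F) ⧸ Sat) := by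
    refine ⟨fun {c x} h => ?_⟩
    obtain ⟨y, rfl⟩ := Submodule.Quotient.mk_surjective Sat x
    by_cases hc : c = 0
    · exact Or.inl hc
    · refine Or.inr ?_
      rw [← Submodule.Quotient.mk_smul, Submodule.Quotient.mk_eq_zero] at h
      rw [Submodule.Quotient.mk_eq_zero]
      obtain ⟨d, hd, hdc⟩ := h
      exact ⟨d * c, mul_ne_zero hd hc, by rw [mul_smul]; exact hdc⟩
  haveI : Module.Finite (Polynomial F) ((Fin n → Polynomial F) ⧸ Sat) :=
    Module.Finite.of_surjective Sat.mkQ (Submodule.mkQ_surjective _)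
  haveI : Module.Free (Polynomial F) ((Fin n → Polynomial F) ⧸ Sat) :=
    Module.free_of_finite_type_torsion_free'
  obtain ⟨s, hs⟩ := Module.projective_lifting_property Sat.mkQ LinearMap.id
    (Submodule.mkQ_surjective Sat)
  set ρ : (Fin n → Polynomial F) →ₗ[Polynomial F] (Fin n → Polynomial F) :=
    LinearMap.id - s ∘ₗ Sat.mkQ with hρ_def
  have hρmem : ∀ x, ρ x ∈ Sat := by
    intro x
    have h1 : Sat.mkQ (ρ x) = 0 := by
      rw [hρ_def]
      simp only [LinearMap.sub_apply, LinearMap.id_apply, LinearMap.comp_apply, map_sub]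
      have h2 : Sat.mkQ (s (Sat.mkQ x)) = Sat.mkQ x := by
        have := LinearMap.congr_fun hs (Sat.mkQ x)
        simpa using this
      rw [h2, sub_self]
    rwa [Submodule.mkQ_apply, Submodule.Quotient.mk_eq_zero] at h1
  have hρid : ∀ x ∈ Sat, ρ x = x := by
    intro x hx
    have h0 : Sat.mkQ x = 0 := by rwa [Submodule.mkQ_apply, Submodule.Quotient.mk_eq_zero]
    rw [hρ_def]
    simp only [LinearMap.sub_apply, LinearMap.id_apply, LinearMap.comp_apply, h0, map_zero,
      sub_zero]
  obtain ⟨m, b⟩ := Submodule.basisOfPid (Pi.basisFun (Polynomial F) (Fin n)) Sat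
  -- k ≤ m
  set rows' : Fin k → Sat := fun i =>
    ⟨rows i, hMSat _ (Submodule.subset_span (Set.mem_range_self i))⟩ with hrows'_def
  have hrows' : LinearIndependent (Polynomial F) rows' :=
    LinearIndependent.of_comp Sat.subtype hrowsR
  have hkm : k ≤ m := by simpa using b.card_le_card_of_linearIndependent hrows'
  -- m ≤ k
  set bv : Fin m → (Fin n → Polynomial F) := fun i => (b i : Fin n → Polynomial F) with hbv_def
  have hbv : LinearIndependent (Polynomial F) bv :=
    b.linearIndependent.map' Sat.subtype (Submodule.ker_subtype Sat)
  have hφbvK : LinearIndependent (RatFunc F) (⇑φ ∘ bv) :=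
    (LinearIndependent.iff_fractionRing (Polynomial F) (RatFunc F)).mp (hbv.map' φ kerφ)
  set S : Submodule (RatFunc F) (Fin n → RatFunc F) :=
    Submodule.span (RatFunc F) (Set.range (⇑φ ∘ rows)) with hS_def
  have hmemS : ∀ i, φ (bv i) ∈ S := by
    intro i
    obtain ⟨c, hc, hcM⟩ := (b i).2
    have h1 : φ (c • bv i) ∈ Submodule.span (Polynomial F) (Set.range (⇑φ ∘ rows)) := by
      rw [Set.range_comp]
      exact Submodule.apply_mem_span_image_of_mem_span (s := Set.range rows) φ hcM
    have h2 : φ (c • bv i) ∈ S := Submodule.span_subset_span (Polynomial F) (RatFunc F) _ h1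
    have h3 : φ (c • bv i) = algebraMap (Polynomial F) (RatFunc F) c • φ (bv i) := by
      rw [_root_.map_smul, algebraMap_smul]
    have hcK : algebraMap (Polynomial F) (RatFunc F) c ≠ 0 := fun hh =>
      hc ((map_eq_zero_iff _ (IsFractionRing.injective (Polynomial F) (RatFunc F))).mp hh)
    have h4 := S.smul_mem (algebraMap (Polynomial F) (RatFunc F) c)⁻¹ h2
    rwa [h3, inv_smul_smul₀ hcK] at h4
  haveI : FiniteDimensional (RatFunc F) S :=
    FiniteDimensional.span_of_finite (RatFunc F) (Set.finite_range _)
  set v' : Fin m → S := fun i => ⟨φ (bv i), hmemS i⟩ with hv'_def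
  have hv' : LinearIndependent (RatFunc F) v' := LinearIndependent.of_comp S.subtype hφbvK
  have hmk2 : m ≤ k := by
    have h1 : m ≤ Module.finrank (RatFunc F) S := by simpa using hv'.fintype_card_le_finrank
    have h2 : Module.finrank (RatFunc F) S ≤ k := by
      simpa [hS_def, Set.finrank] using finrank_range_le_card (⇑φ ∘ rows)
    exact h1.trans h2
  have hmk : m = k := le_antisymm hmk2 hkm
  set b' : Module.Basis (Fin k) (Polynomial F) Sat := b.reindex (finCongr hmk) with hb'_def
  -- the encoder and its right inverse
  set Hb : Matrix (Fin k) (Fin n) (Polynomial F) :=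
    Matrix.of (fun i j => (b' i : Fin n → Polynomial F) j) with hHb_def
  set e : Fin n → (Fin n → Polynomial F) :=
    fun j => fun j' => if j = j' then (1 : Polynomial F) else 0 with he_def
  set ρ2 : (Fin n → Polynomial F) →ₗ[Polynomial F] Sat :=
    LinearMap.codRestrict Sat ρ hρmem with hρ2_def
  set Cb : Matrix (Fin n) (Fin k) (Polynomial F) :=
    Matrix.of (fun j i => b'.repr (ρ2 (e j)) i) with hCb_def
  set ψ : Fin k → ((Fin n → Polynomial F) →ₗ[Polynomial F] Polynomial F) := fun i' =>
    (Finsupp.lapply i') ∘ₗ (b'.repr.toLinearMap.comp ρ2) with hψ_def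
  have hψ_apply : ∀ (i' : Fin k) (x : Fin n → Polynomial F),
      ψ i' x = b'.repr (ρ2 x) i' := fun _ _ => rfl
  have hHC : Hb * Cb = 1 := by
    apply Matrix.ext
    intro i i'
    rw [Matrix.mul_apply, Matrix.one_apply]
    have step : ∀ j, Hb i j * Cb j i' = ψ i' ((b' i : Fin n → Polynomial F) j • e j) := by
      intro j
      rw [_root_.map_smul, smul_eq_mul, hψ_apply]
      rfl
    calc ∑ j, Hb i j * Cb j i'
        = ∑ j, ψ i' ((b' i : Fin n → Polynomial F) j • e j) :=
          Finset.sum_congr rfl fun j _ => step j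
      _ = ψ i' (∑ j, (b' i : Fin n → Polynomial F) j • e j) := (map_sum (ψ i') _ _).symm
      _ = ψ i' ((b' i : Fin n → Polynomial F)) := by
          rw [← pi_eq_sum_univ ((b' i : Fin n → Polynomial F))]
      _ = b'.repr (ρ2 (b' i : Fin n → Polynomial F)) i' := hψ_apply i' _
      _ = (if i = i' then 1 else 0) := by
          have hρ2b : ρ2 ((b' i : Fin n → Polynomial F)) = b' i := by
            apply Subtype.ext
            exact hρid _ (b' i).2
          rw [hρ2b, Module.Basis.repr_self, Finsupp.single_apply]
  refine ⟨Hb, Cb, hHC, ?_, ?_⟩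
  · -- rows of Hb in code of Gb
    intro i
    obtain ⟨c, hc, hcM⟩ := (b' i).2
    rw [hM_def, Submodule.mem_span_range_iff_exists_fun] at hcM
    obtain ⟨d, hd⟩ := hcM
    have hcls : polyToLS c ≠ 0 := fun hh => hc (polyToLS_injective (by rw [hh, map_zero]))
    refine ⟨fun l => (polyToLS c)⁻¹ * polyToLS (d l), ?_⟩
    funext j
    have hdj : ∑ l, polyToLS (d l) * polyToLS (Gb l j)
        = polyToLS c * polyToLS ((b' i : Fin n → Polynomial F) j) := by
      calc ∑ l, polyToLS (d l) * polyToLS (Gb l j)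
          = ∑ l, polyToLS (d l * Gb l j) := by simp [_root_.map_mul]
        _ = polyToLS (∑ l, d l * Gb l j) := (map_sum _ _ _).symm
        _ = polyToLS (c * (b' i : Fin n → Polynomial F) j) := by
            congr 1
            have := congrFun hd j
            simp only [Finset.sum_apply, Pi.smul_apply, smul_eq_mul] at this
            simpa using this
        _ = polyToLS c * polyToLS ((b' i : Fin n → Polynomial F) j) := _root_.map_mul _ _ _
    have hvm : Matrix.vecMul (fun l => (polyToLS c)⁻¹ * polyToLS (d l)) (Gb.map polyToLS) j
        = (polyToLS c)⁻¹ * ∑ l, polyToLS (d l) * polyToLS (Gb l j) := by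
      simp only [Matrix.vecMul, dotProduct, Matrix.map_apply, Finset.mul_sum]
      exact Finset.sum_congr rfl fun l _ => by ring
    rw [hvm, hdj, inv_mul_cancel_left₀ hcls]
    rfl
  · -- rows of Gb in code of Hb
    intro l
    set x : Sat := ⟨rows l, hMSat _ (Submodule.subset_span (Set.mem_range_self l))⟩ with hx_def
    have hx : ∑ i, b'.repr x i • (b' i : Fin n → Polynomial F) = rows l := by
      have h1 := b'.sum_repr x
      have h2 := congrArg (Subtype.val) h1
      rw [AddSubmonoidClass.coe_finset_sum] at h2
      simpa using h2
    refine ⟨fun i => polyToLS (b'.repr x i), ?_⟩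
    funext j
    have hxj := congrFun hx j
    simp only [Finset.sum_apply, Pi.smul_apply, smul_eq_mul] at hxj
    have hls : ∑ i, polyToLS (b'.repr x i) * polyToLS ((b' i : Fin n → Polynomial F) j)
        = polyToLS (Gb l j) := by
      calc ∑ i, polyToLS (b'.repr x i) * polyToLS ((b' i : Fin n → Polynomial F) j)
          = ∑ i, polyToLS (b'.repr x i * (b' i : Fin n → Polynomial F) j) := by
            simp [_root_.map_mul]
        _ = polyToLS (∑ i, b'.repr x i * (b' i : Fin n → Polynomial F) j) := (map_sum _ _ _).symm
        _ = polyToLS (Gb l j) := congrArg _ (by simpa using hxj)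
    show polyToLS (Gb l j) = _
    rw [← hls]
    simp only [Matrix.vecMul, dotProduct, Matrix.map_apply, Matrix.of_apply]
    rfl


theorem exists_noncat_H_spanning_smul_rows (p r : ℕ) [Fact p.Prime] (hr : 1 ≤ r)
    {k n : ℕ} (hkn : k ≤ n)
    (G : Matrix (Fin k) (Fin n) (Polynomial (ZMod (p ^ r))))
    (hG : FullRowRank (projM p r (Nat.one_le_iff_ne_zero.mp hr) G)) :
    ∃ i₀ : ℕ, i₀ < r ∧
      ∃ H : Matrix (Fin k) (Fin n) (Polynomial (ZMod (p ^ r))), Noncat H ∧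
        ∀ i : ℕ, i₀ ≤ i → i < r →
          codeOf (((p : ZMod (p ^ r)) ^ i) • H) = codeOf (((p : ZMod (p ^ r)) ^ i) • G) := by
  classical
  have hr' : r ≠ 0 := Nat.one_le_iff_ne_zero.mp hr
  obtain ⟨Hb, Cb, hHC, hrow1, hrow2⟩ := exists_basicEncoder (ZMod p) (projM p r hr' G) hG
  set H : Matrix (Fin k) (Fin n) (Polynomial (ZMod (p ^ r))) := liftMp p r Hb with hH_def
  set C1 : Matrix (Fin n) (Fin k) (Polynomial (ZMod (p ^ r))) := Cb.map (liftP p r) with hC1_def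
  set N : Matrix (Fin k) (Fin k) (Polynomial (ZMod (p ^ r))) := 1 - H * C1 with hN_def
  have hprojH : projM p r hr' H = Hb := projM_liftM p r hr' Hb
  have hN1 : ∀ i j, Pdvd p r 1 (N i j) := by
    intro i j
    apply Pdvd_of_proj_zero
    have hHC' : ∀ i j, projP p r hr' ((H * C1) i j) = (1 : Matrix (Fin k) (Fin k) (Polynomial (ZMod p))) i j := by
      intro i j
      rw [Matrix.mul_apply]
      have : ∀ l, projP p r hr' (H i l * C1 l j) = Hb i l * Cb l j := by
        intro l
        show Polynomial.map _ (H i l * C1 l j) = _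
        rw [Polynomial.map_mul]
        have e1 : Polynomial.map (ZMod.castHom (dvd_pow_self p hr') (ZMod p)) (H i l) = Hb i l :=
          projP_liftP p r hr' (Hb i l)
        have e2 : Polynomial.map (ZMod.castHom (dvd_pow_self p hr') (ZMod p)) (C1 l j) = Cb l j :=
          projP_liftP p r hr' (Cb l j)
        rw [e1, e2]
      rw [show (projP p r hr') = ⇑(Polynomial.mapRingHom (pi0 p r hr')) from rfl, map_sum]
      have this2 : ∀ l ∈ Finset.univ, (Polynomial.mapRingHom (pi0 p r hr')) (H i l * C1 l j)
          = Hb i l * Cb l j := fun l _ => this l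
      rw [Finset.sum_congr rfl this2, ← Matrix.mul_apply, hHC]
    have : projP p r hr' (N i j) = 0 := by
      rw [hN_def]
      show projP p r hr' ((1 : Matrix (Fin k) (Fin k) (Polynomial (ZMod (p ^ r)))) i j - (H * C1) i j) = 0
      rw [show (projP p r hr') = ⇑(Polynomial.mapRingHom (pi0 p r hr')) from rfl, map_sub]
      rw [show (⇑(Polynomial.mapRingHom (pi0 p r hr'))) = projP p r hr' from rfl]
      rw [hHC' i j]
      have h1 : projP p r hr' ((1 : Matrix (Fin k) (Fin k) (Polynomial (ZMod (p ^ r)))) i j)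
          = (1 : Matrix (Fin k) (Fin k) (Polynomial (ZMod p))) i j := by
        by_cases hij : i = j
        · subst hij
          simp [Matrix.one_apply, projP]
        · simp [Matrix.one_apply, hij, projP]
      rw [h1, sub_self]
    exact this
  have hNr : N ^ r = 0 := pow_eq_zero_matrix p r hN1
  set C2 : Matrix (Fin n) (Fin k) (Polynomial (ZMod (p ^ r))) :=
    C1 * ∑ i ∈ Finset.range r, N ^ i with hC2_def
  have hHC2 : H * C2 = 1 := by
    rw [hC2_def, ← Matrix.mul_assoc]
    have : H * C1 = 1 - N := by rw [hN_def]; exact (sub_sub_cancel 1 (H * C1)).symm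
    rw [this]
    exact geom_inverse p r hNr
  refine ⟨r - 1, Nat.sub_lt (by omega) one_pos, H, noncat_of_rightInverse hHC2, ?_⟩
  intro i hi1 hi2
  have hi : i = r - 1 := by omega
  subst hi
  have hHbGb : codeOf Hb ⊆ codeOf (projM p r hr' G) := codeOf_subset_of_rows hrow1
  have hGbHb : codeOf (projM p r hr' G) ⊆ codeOf Hb := codeOf_subset_of_rows hrow2
  apply Set.Subset.antisymm
  · exact bridge_subset p r hr' H G (by rw [hprojH]; exact hHbGb)
  · exact bridge_subset p r hr' G H (by rw [hprojH]; exact hGbHb)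
end
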